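/- arXiv:math/0006152 — 3 statements merged into one kernel-verified Lean document; each statement's English description precedes it below -/
import Mathlib

section
/- The elements δ_x ⊗ δ_y with x ≠ y form a ℂ-basis of the kernel of the multiplication map μ : M ⊗ M → M, and the assignment S ↦ span_ℂ{δ_x ⊗ δ_y : (x,y) ∈ S} is a bijection from the set of subsets S ⊆ (Σ×Σ) \ diagonal onto the set of sub-bimodules of ker μ (ℂ-linear subspaces closed under left and right multiplication by elements of M in the two tensor factors). Consequently, first-order differential calculi on M (quotients of the universal calculus ker μ by sub-bimodules) are in bijective correspondence with subsets E ⊆ (Σ×Σ) \ diagonal. -/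
/-
In the basis `δ_x ⊗ δ_y` of `M ⊗ M`, the value of `μ t` at `x` is the `(x, x)`-coordinate of
`t`, so `ker μ` is spanned by the off-diagonal basis vectors. Multiplying by `f` in the first
(second) factor scales the `(x, y)`-coordinate by `f x` (`f y`), so the span of any set of
off-diagonal basis vectors is a sub-bimodule. Conversely, multiplying `t` by `δ_x` in the first
factor and by `δ_y` in the second extracts its `(x, y)`-component; hence a sub-bimodule contains
every basis vector occurring in one of its elements, and is the span of the basis vectors it
contains.
-/

open TensorProduct

noncomputable section

variable (S : Type*) [Fintype S] [DecidableEq S]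

/-- The algebra of ℂ-valued functions on the finite set `S`. -/
abbrev M := S → ℂ

/-- The delta function at a point. -/
def delta (x : S) : M S := Pi.single x 1

/-- The multiplication map `μ : M ⊗ M → M`. -/
def mu : (M S) ⊗[ℂ] (M S) →ₗ[ℂ] M S := LinearMap.mul' ℂ (M S)

/-- The element `δ_x ⊗ δ_y` of `M ⊗ M` attached to a pair `p = (x, y)`. -/
def deltaTensor (p : S × S) : (M S) ⊗[ℂ] (M S) := delta S p.1 ⊗ₜ[ℂ] delta S p.2

/-- The span of the `δ_x ⊗ δ_y` over a set of off-diagonal pairs. -/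
def spanOf (E : Set {p : S × S // p.1 ≠ p.2}) : Submodule ℂ ((M S) ⊗[ℂ] (M S)) :=
  Submodule.span ℂ ((fun p : {p : S × S // p.1 ≠ p.2} => deltaTensor S p.1) '' E)

/-- A sub-bimodule of `ker μ`: a ℂ-subspace contained in `ker μ` and closed under
left multiplication by elements of `M` in the first tensor factor and right
multiplication in the second tensor factor. -/
def IsSubBimodule (N : Submodule ℂ ((M S) ⊗[ℂ] (M S))) : Prop :=
  N ≤ LinearMap.ker (mu S) ∧
  (∀ (f : M S) (t), t ∈ N → (LinearMap.rTensor (M S) (LinearMap.mulLeft ℂ f)) t ∈ N) ∧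
  (∀ (f : M S) (t), t ∈ N → (LinearMap.lTensor (M S) (LinearMap.mulRight ℂ f)) t ∈ N)

theorem Module.Basis.eq_span_image_of_smul_mem {ι K V : Type*} [DivisionRing K]
    [AddCommGroup V] [Module K V] (b : Module.Basis ι K V) {N : Submodule K V}
    (hN : ∀ t ∈ N, ∀ i, b.repr t i • b i ∈ N) :
    N = Submodule.span K (b '' {i | b i ∈ N}) := by
  refine le_antisymm (fun t ht => b.mem_span_image.2 fun i hi => ?_) ?_
  · exact (N.smul_mem_iff (Finsupp.mem_support_iff.1 hi)).1 (hN t ht i)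
  · exact Submodule.span_le.2 (Set.image_subset_iff.2 fun _ => id)

theorem Module.Basis.map_mem_span_image_of_repr_eq_mul {ι R V : Type*} [Semiring R]
    [AddCommMonoid V] [Module R V] (b : Module.Basis ι R V) (φ : V →ₗ[R] V) (c : ι → R)
    (hφ : ∀ t i, b.repr (φ t) i = c i * b.repr t i) {s : Set ι} {t : V}
    (ht : t ∈ Submodule.span R (b '' s)) : φ t ∈ Submodule.span R (b '' s) := by
  refine b.mem_span_image.2 fun i hi => b.mem_span_image.1 ht ?_
  rw [Finset.mem_coe, Finsupp.mem_support_iff, hφ] at hi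
  exact Finsupp.mem_support_iff.2 (right_ne_zero_of_mul hi)

section

variable {R ι κ : Type*} [CommSemiring R] [Finite ι] [Finite κ]

theorem Pi.basisFun_tensorProduct_repr_rTensor_mulLeft (f : ι → R)
    (t : (ι → R) ⊗[R] (κ → R)) (p : ι × κ) :
    ((Pi.basisFun R ι).tensorProduct (Pi.basisFun R κ)).repr
        (LinearMap.rTensor (κ → R) (LinearMap.mulLeft R f) t) p =
      f p.1 * ((Pi.basisFun R ι).tensorProduct (Pi.basisFun R κ)).repr t p := by
  obtain ⟨i, j⟩ := p
  induction t using TensorProduct.induction_on with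
  | zero => simp
  | tmul g h => simp [mul_comm, mul_left_comm]
  | add t u ht hu => simp [ht, hu, mul_add]

theorem Pi.basisFun_tensorProduct_repr_lTensor_mulRight (f : κ → R)
    (t : (ι → R) ⊗[R] (κ → R)) (p : ι × κ) :
    ((Pi.basisFun R ι).tensorProduct (Pi.basisFun R κ)).repr
        (LinearMap.lTensor (ι → R) (LinearMap.mulRight R f) t) p =
      f p.2 * ((Pi.basisFun R ι).tensorProduct (Pi.basisFun R κ)).repr t p := by
  obtain ⟨i, j⟩ := p
  induction t using TensorProduct.induction_on with
  | zero => simp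
  | tmul g h => simp [mul_comm, mul_left_comm]
  | add t u ht hu => simp [ht, hu, mul_add]

theorem Pi.mul'_apply_eq_basisFun_tensorProduct_repr (t : (ι → R) ⊗[R] (ι → R)) (x : ι) :
    LinearMap.mul' R (ι → R) t x =
      ((Pi.basisFun R ι).tensorProduct (Pi.basisFun R ι)).repr t (x, x) := by
  induction t using TensorProduct.induction_on with
  | zero => simp
  | tmul f g => simp [mul_comm]
  | add t u ht hu => simp [ht, hu]

end

section

variable {S}

abbrev deltaBasis : Module.Basis (S × S) ℂ ((M S) ⊗[ℂ] (M S)) :=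
  (Pi.basisFun ℂ S).tensorProduct (Pi.basisFun ℂ S)

theorem deltaBasis_apply (p : S × S) : deltaBasis p = deltaTensor S p := by
  simp [deltaBasis, Module.Basis.tensorProduct_apply', deltaTensor, delta]

theorem rTensor_mulLeft_lTensor_mulRight_delta (t : (M S) ⊗[ℂ] (M S)) (p : S × S) :
    LinearMap.rTensor (M S) (LinearMap.mulLeft ℂ (delta S p.1))
        (LinearMap.lTensor (M S) (LinearMap.mulRight ℂ (delta S p.2)) t) =
      deltaBasis.repr t p • deltaTensor S p := by
  refine deltaBasis.repr.injective (Finsupp.ext fun q => ?_)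
  rw [Pi.basisFun_tensorProduct_repr_rTensor_mulLeft,
    Pi.basisFun_tensorProduct_repr_lTensor_mulRight, ← deltaBasis_apply]
  by_cases hqp : q = p
  · simp [hqp, delta]
  · obtain hq | hq : q.1 ≠ p.1 ∨ q.2 ≠ p.2 := by rwa [Prod.ext_iff, not_and_or] at hqp
    all_goals simp [delta, hq, Ne.symm hqp]

theorem spanOf_eq_span_image (E : Set {p : S × S // p.1 ≠ p.2}) :
    spanOf S E = Submodule.span ℂ (deltaBasis '' (Subtype.val '' E)) := by
  simp only [spanOf, Set.image_image, deltaBasis_apply]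

theorem deltaTensor_mem_spanOf {E : Set {p : S × S // p.1 ≠ p.2}}
    {p : {p : S × S // p.1 ≠ p.2}} :
    deltaTensor S p.1 ∈ spanOf S E ↔ p ∈ E := by
  rw [spanOf_eq_span_image, ← deltaBasis_apply, deltaBasis.self_mem_span_image,
    Subtype.val_injective.mem_set_image]

theorem spanOf_injective : Function.Injective (spanOf S) := fun E₁ E₂ h =>
  Set.ext fun _ => by rw [← deltaTensor_mem_spanOf, h, deltaTensor_mem_spanOf]

theorem ker_mu_eq_spanOf_univ : LinearMap.ker (mu S) = spanOf S Set.univ := by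
  ext t
  rw [LinearMap.mem_ker, funext_iff, spanOf_eq_span_image, deltaBasis.mem_span_image,
    Set.image_univ, Subtype.range_coe_subtype]
  simp only [mu, Pi.mul'_apply_eq_basisFun_tensorProduct_repr, Pi.zero_apply]
  constructor
  · rintro h ⟨x, y⟩ hxy (rfl : x = y)
    exact Finsupp.mem_support_iff.1 hxy (h x)
  · intro h x
    by_contra hx
    exact h (Finsupp.mem_support_iff.2 hx) rfl

theorem isSubBimodule_spanOf (E : Set {p : S × S // p.1 ≠ p.2}) :
    IsSubBimodule S (spanOf S E) := by
  refine ⟨?_, fun f t ht => ?_, fun f t ht => ?_⟩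
  · rw [ker_mu_eq_spanOf_univ]
    exact Submodule.span_mono (Set.image_mono (Set.subset_univ E))
  · rw [spanOf_eq_span_image] at ht ⊢
    exact deltaBasis.map_mem_span_image_of_repr_eq_mul _ (fun p => f p.1)
      (Pi.basisFun_tensorProduct_repr_rTensor_mulLeft f) ht
  · rw [spanOf_eq_span_image] at ht ⊢
    exact deltaBasis.map_mem_span_image_of_repr_eq_mul _ (fun p => f p.2)
      (Pi.basisFun_tensorProduct_repr_lTensor_mulRight f) ht

theorem spanOf_setOf_deltaTensor_mem {N : Submodule ℂ ((M S) ⊗[ℂ] (M S))}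
    (hN : IsSubBimodule S N) : spanOf S {p | deltaTensor S p.1 ∈ N} = N := by
  have hproj : ∀ t ∈ N, ∀ p, deltaBasis.repr t p • deltaBasis p ∈ N := fun t ht p => by
    rw [deltaBasis_apply, ← rTensor_mulLeft_lTensor_mulRight_delta]
    exact hN.2.1 _ _ (hN.2.2 _ _ ht)
  have hsupp : Subtype.val '' {p : {p : S × S // p.1 ≠ p.2} | deltaTensor S p.1 ∈ N} =
      {i | deltaBasis i ∈ N} := by
    ext p
    constructor
    · rintro ⟨q, hq, rfl⟩
      show deltaBasis q.1 ∈ N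
      rwa [deltaBasis_apply]
    · intro (hp : deltaBasis p ∈ N)
      have hoff := hN.1 hp
      rw [ker_mu_eq_spanOf_univ, spanOf_eq_span_image, deltaBasis.self_mem_span_image] at hoff
      obtain ⟨q, -, rfl⟩ := hoff
      rw [deltaBasis_apply] at hp
      exact ⟨q, hp, rfl⟩
  rw [spanOf_eq_span_image, hsupp, ← deltaBasis.eq_span_image_of_smul_mem hproj]

theorem linearIndependent_deltaTensor_offDiag :
    LinearIndependent ℂ (fun p : {p : S × S // p.1 ≠ p.2} => deltaTensor S p.1) := by
  have h : deltaBasis ∘ Subtype.val = fun p : {p : S × S // p.1 ≠ p.2} => deltaTensor S p.1 :=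
    funext fun p => deltaBasis_apply p.1
  exact h ▸ deltaBasis.linearIndependent.comp _ Subtype.val_injective

end

theorem deltaTensor_basis_ker_mul_and_subbimodule_bijection :
    (∃ b : Module.Basis {p : S × S // p.1 ≠ p.2} ℂ (LinearMap.ker (mu S)),
      ∀ p, (b p : (M S) ⊗[ℂ] (M S)) = deltaTensor S p.1) ∧
    Set.BijOn (spanOf S) Set.univ {N | IsSubBimodule S N} := by
  have hspan :
      Submodule.span ℂ (Set.range fun p : {p : S × S // p.1 ≠ p.2} => deltaTensor S p.1) =
        LinearMap.ker (mu S) := by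
    rw [ker_mu_eq_spanOf_univ, spanOf, Set.image_univ]
  refine ⟨⟨(Module.Basis.span linearIndependent_deltaTensor_offDiag).map
      (LinearEquiv.ofEq _ _ hspan), fun p => ?_⟩, ?_, spanOf_injective.injOn, fun N hN => ?_⟩
  · simp [Module.Basis.span_apply]
  · exact fun E _ => isSubBimodule_spanOf E
  · exact ⟨_, Set.mem_univ _, spanOf_setOf_deltaTensor_mem hN⟩

end
end

section
/- There exists a V-bein of rank n on (Σ, E), i.e. a family of 1-forms E_1, …, E_n ∈ Ω¹_E such that for every x ∈ Σ the linear map ℂ^n → ℂ^{F_x}, (c_1,…,c_n) ↦ (y ↦ Σ_i c_i E_i(x,y)), is a linear isomorphism, if and only if every fiber F_x = {y ∈ Σ : (x,y) ∈ E} has cardinality exactly n. In particular a V-bein of some rank exists iff all fibers F_x have equal size, and then n = |E|/|Σ|. -/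
/- STATEMENT 2: A V-bein of rank `n` on `(S, E)` exists iff every fiber
`F_x = {y : (x,y) ∈ E}` has cardinality exactly `n`; and when a rank-`n` V-bein
exists, `|E| = n·|S|`. -/

noncomputable section

variable (S : Type*) [Fintype S] [DecidableEq S] (E : Set (S × S)) (n : ℕ)

/-- The 1-forms: functions on `E`. -/
abbrev Omega1 := {p : S × S // p ∈ E} → ℂ

/-- The fiber of `E` over `x`. -/
abbrev Fib (x : S) := {y : S // (x, y) ∈ E}

/-- A family `E_1, …, E_n` of 1-forms is a V-bein when, for every `x`, the map
`ℂⁿ → ℂ^{F_x}`, `c ↦ (y ↦ Σ_i c_i E_i(x,y))`, is a linear isomorphism (equivalently,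
since it is linear, bijective). -/
def IsVBein (Eb : Fin n → Omega1 S E) : Prop :=
  ∀ x : S, Function.Bijective
    (fun (c : Fin n → ℂ) => fun (y : Fib S E x) => ∑ i : Fin n, c i * Eb i ⟨(x, y.1), y.2⟩)

lemma vbein_forward (Eb : Fin n → Omega1 S E) (h : IsVBein S E n Eb) :
    ∀ x : S, Nat.card (Fib S E x) = n := by
  intro x
  have : Fintype (Fib S E x) := Fintype.ofFinite _
  let L : (Fin n → ℂ) →ₗ[ℂ] (Fib S E x → ℂ) :=
    { toFun := fun c y => ∑ i : Fin n, c i * Eb i ⟨(x, y.1), y.2⟩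
      map_add' := by
        intro a b; funext y; simp [add_mul, Finset.sum_add_distrib]
      map_smul' := by
        intro m a; funext y; simp [Finset.mul_sum, mul_assoc] }
  have hL : Function.Bijective L := h x
  have e := LinearEquiv.ofBijective L hL
  have h1 := e.finrank_eq
  rw [Module.finrank_fin_fun, Module.finrank_fintype_fun_eq_card] at h1
  rw [Nat.card_eq_fintype_card, ← h1]

theorem vbein_exists_iff_fibers_card (hE : ∀ p ∈ E, p.1 ≠ p.2) :
    ((∃ Eb : Fin n → Omega1 S E, IsVBein S E n Eb) ↔
      (∀ x : S, Nat.card (Fib S E x) = n)) ∧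
    ((∃ Eb : Fin n → Omega1 S E, IsVBein S E n Eb) →
      Nat.card {p : S × S // p ∈ E} = n * Nat.card S) := by
  have fwd : (∃ Eb : Fin n → Omega1 S E, IsVBein S E n Eb) →
      ∀ x : S, Nat.card (Fib S E x) = n := by
    rintro ⟨Eb, h⟩; exact vbein_forward S E n Eb h
  constructor
  · constructor
    · exact fwd
    · intro hcard
      have hft : ∀ x : S, Fintype (Fib S E x) := fun x => Fintype.ofFinite _
      have hcard' : ∀ x : S, @Fintype.card (Fib S E x) (hft x) = n := by
        intro x
        rw [← @Nat.card_eq_fintype_card _ (hft x)]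
        exact hcard x
      let e : ∀ x : S, Fib S E x ≃ Fin n := fun x =>
        @Fintype.equivFinOfCardEq _ (hft x) n (hcard' x)
      refine ⟨fun i p => if e p.1.1 ⟨p.1.2, p.2⟩ = i then 1 else 0, ?_⟩
      intro x
      have key : (fun (c : Fin n → ℂ) => fun (y : Fib S E x) =>
          ∑ i : Fin n, c i * (if e x ⟨y.1, y.2⟩ = i then (1:ℂ) else 0))
          = fun c y => c (e x y) := by
        funext c y
        simp [mul_ite, mul_one, mul_zero]
      rw [key]
      constructor
      · intro c c' hcc
        funext i
        have := congrFun hcc ((e x).symm i)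
        simpa using this
      · intro g
        exact ⟨fun i => g ((e x).symm i), by funext y; simp⟩
  · intro hex
    have hcard := fwd hex
    have : ∀ x : S, Fintype (Fib S E x) := fun x => Fintype.ofFinite _
    have eq : {p : S × S // p ∈ E} ≃ Σ x : S, Fib S E x :=
      Equiv.subtypeProdEquivSigmaSubtype (fun x y => (x, y) ∈ E)
    refine Nat.card_eq_of_equiv_fin ?_
    calc {p : S × S // p ∈ E} ≃ Σ x : S, Fib S E x := eq
        _ ≃ Σ _ : S, Fin n := Equiv.sigmaCongrRight fun x =>
            (Fintype.equivFinOfCardEq (by rw [← Nat.card_eq_fintype_card]; exact hcard x))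
        _ ≃ S × Fin n := Equiv.sigmaEquivProd S (Fin n)
        _ ≃ Fin (n * Nat.card S) := by
            rw [Nat.card_eq_fintype_card]
            exact (Equiv.prodComm _ _).trans
              ((Fintype.equivFin _).trans (finCongr (by simp)))

end
end

section
/- There exist an injective group homomorphism ρ : S₃ → GL₂(ℂ) and a family of 2×2 complex matrices (γ_a)_{a∈C}, not all scalar multiples of the identity, such that: (i) equivariance holds, ρ(g)γ_aρ(g)⁻¹ = γ_{gag⁻¹} for all g ∈ S₃ and a ∈ C; (ii) the deformed Clifford relation γ_aγ_b + γ_bγ_a + (2/3)(γ_a + γ_b) = (1/3)(δ_{a,b} − 1)·I holds for all a, b ∈ C; and (iii) Σ_{a∈C} Σ_{i∈C} (δ_{a,i} − 1/3)·γ_i·(ρ(a) − I) = I, so that the associated Dirac operator takes the form D = Σ_i ∂^i γ_i − 1. -/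
/- STATEMENT 10: There exist an injective homomorphism `ρ : S₃ → GL₂(ℂ)` and
`2×2` matrices `(γ_a)_{a∈C}`, not all scalar, with (i) equivariance
`ρ(g)γ_aρ(g)⁻¹ = γ_{gag⁻¹}`, (ii) the deformed Clifford relation
`γ_aγ_b + γ_bγ_a + (2/3)(γ_a + γ_b) = (1/3)(δ_{a,b} − 1)·I`, and
(iii) `Σ_{a,i∈C} (δ_{a,i} − 1/3)·γ_i·(ρ(a) − I) = I`, so the Dirac operator is
`D = Σ_i ∂^i γ_i − 1`. -/

noncomputable section

open scoped Classical

abbrev S3 := Equiv.Perm (Fin 3)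

/-- The conjugacy class of the three transpositions in `S₃`. -/
def Cset : Finset S3 := Finset.univ.filter (fun g => g.IsSwap)

abbrev Mat2 := Matrix (Fin 2) (Fin 2) ℂ

def fZ (σ : S3) : Matrix (Fin 2) (Fin 2) ℤ :=
  Matrix.of fun i j =>
    (if ((σ j.castSucc : Fin 3) : ℕ) ≤ (i : ℕ) then 1 else 0)
      - (if ((σ j.succ : Fin 3) : ℕ) ≤ (i : ℕ) then 1 else 0)

lemma fZ_one : fZ 1 = 1 := by decide
lemma fZ_mul : ∀ σ τ : S3, fZ (σ * τ) = fZ σ * fZ τ := by decide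
lemma fZ_inj : ∀ σ τ : S3, fZ σ = fZ τ → σ = τ := by decide
lemma hv1 : fZ (Equiv.swap 0 1) = !![(-1:ℤ),1;0,1] := by decide
lemma hv2 : fZ (Equiv.swap 0 2) = !![(0:ℤ),-1;-1,0] := by decide
lemma hv3 : fZ (Equiv.swap 1 2) = !![(1:ℤ),0;1,-1] := by decide

lemma mem_Cset {a : S3} : a ∈ Cset ↔ a.IsSwap := by simp [Cset]

lemma hCset : Cset = {Equiv.swap 0 1, Equiv.swap 0 2, Equiv.swap 1 2} := by
  ext a
  rw [mem_Cset]
  simp only [Finset.mem_insert, Finset.mem_singleton, Equiv.Perm.IsSwap]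
  revert a
  decide

def fC (σ : S3) : Mat2 := (fZ σ).map (Int.cast)

lemma fC_one : fC 1 = 1 := by
  rw [fC, fZ_one]; exact Matrix.map_one _ (by simp) (by simp)
lemma fC_mul (σ τ : S3) : fC (σ * τ) = fC σ * fC τ := by
  rw [fC, fZ_mul]
  exact Matrix.map_mul (f := Int.castRingHom ℂ)
lemma fC_mul_inv (σ : S3) : fC σ * fC σ⁻¹ = 1 := by
  rw [← fC_mul]; simp [fC_one]
lemma fC_inv_mul (σ : S3) : fC σ⁻¹ * fC σ = 1 := by
  rw [← fC_mul]; simp [fC_one]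

lemma fCv : fC (Equiv.swap 0 1) = !![(-1:ℂ),1;0,1]
    ∧ fC (Equiv.swap 0 2) = !![(0:ℂ),-1;-1,0]
    ∧ fC (Equiv.swap 1 2) = !![(1:ℂ),0;1,-1] := by
  refine ⟨?_, ?_, ?_⟩ <;>
    · rw [fC]; first | rw [hv1] | rw [hv2] | rw [hv3]
      ext i j; fin_cases i <;> fin_cases j <;> simp [Matrix.map_apply]

def ρ0 : S3 →* Mat2ˣ where
  toFun σ := ⟨fC σ, fC σ⁻¹, fC_mul_inv σ, fC_inv_mul σ⟩
  map_one' := by ext : 1; exact fC_one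
  map_mul' σ τ := by ext : 1; exact fC_mul σ τ

lemma ρ0_inj : Function.Injective ρ0 := by
  intro σ τ h
  apply fZ_inj
  have h2 : fC σ = fC τ := congrArg Units.val h
  ext i j
  have h3 : ((fZ σ i j : ℤ) : ℂ) = ((fZ τ i j : ℤ) : ℂ) :=
    congrFun (congrFun h2 i) j
  exact_mod_cast h3

def γ0 (a : S3) : Mat2 := (1/3 : ℂ) • (fC a - 1)

lemma ne1 : (Equiv.swap 0 1 : S3) ≠ Equiv.swap 0 2 := by decide
lemma ne2 : (Equiv.swap 0 1 : S3) ≠ Equiv.swap 1 2 := by decide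
lemma ne3 : (Equiv.swap 0 2 : S3) ≠ Equiv.swap 1 2 := by decide

set_option maxHeartbeats 2000000 in
theorem gamma_matrices_S3 :
    ∃ (ρ : S3 →* Mat2ˣ) (γ : S3 → Mat2),
      Function.Injective ρ ∧
      (∃ a ∈ Cset, ∀ c : ℂ, γ a ≠ c • (1 : Mat2)) ∧
      (∀ g : S3, ∀ a ∈ Cset, (ρ g : Mat2) * γ a * ((ρ g)⁻¹ : Mat2ˣ) = γ (g * a * g⁻¹)) ∧
      (∀ a ∈ Cset, ∀ b ∈ Cset,
        γ a * γ b + γ b * γ a + (2 / 3 : ℂ) • (γ a + γ b) =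
          ((1 / 3 : ℂ) * ((if a = b then 1 else 0) - 1)) • (1 : Mat2)) ∧
      (∑ a ∈ Cset, ∑ i ∈ Cset,
          ((if a = i then (1 : ℂ) else 0) - 1 / 3) • (γ i * ((ρ a : Mat2) - 1)) =
        (1 : Mat2)) := by
  obtain ⟨hc1, hc2, hc3⟩ := fCv
  refine ⟨ρ0, γ0, ρ0_inj, ?_, ?_, ?_, ?_⟩
  · -- non-scalar
    refine ⟨Equiv.swap 0 1, ?_, ?_⟩
    · rw [hCset]; simp
    · intro c h
      have h2 : γ0 (Equiv.swap 0 1) 0 1 = (c • (1 : Mat2)) 0 1 := by rw [h]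
      rw [γ0, hc1] at h2
      simp [Matrix.one_apply] at h2
  · -- equivariance
    intro g a _
    show fC g * γ0 a * fC g⁻¹ = γ0 (g * a * g⁻¹)
    rw [γ0, γ0, fC_mul, fC_mul]
    rw [Matrix.mul_smul, Matrix.smul_mul, mul_sub, mul_one, sub_mul, fC_mul_inv]
  · -- Clifford relation
    intro a ha b hb
    rw [hCset] at ha hb
    simp only [Finset.mem_insert, Finset.mem_singleton] at ha hb
    rcases ha with rfl | rfl | rfl <;> rcases hb with rfl | rfl | rfl <;>
      first
        | rw [if_pos rfl]
        | rw [if_neg ne1] | rw [if_neg ne2] | rw [if_neg ne3]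
        | rw [if_neg (Ne.symm ne1)] | rw [if_neg (Ne.symm ne2)]
        | rw [if_neg (Ne.symm ne3)]
    all_goals
      simp only [γ0, hc1, hc2, hc3]
      ext i j
      fin_cases i <;> fin_cases j <;>
        simp [Matrix.mul_apply, Fin.sum_univ_two, Matrix.one_apply] <;> norm_num
  · -- sum identity
    have hsum : ∀ F : S3 → Mat2,
        ∑ x ∈ ({Equiv.swap 0 1, Equiv.swap 0 2, Equiv.swap 1 2} : Finset S3), F x
          = F (Equiv.swap 0 1) + (F (Equiv.swap 0 2) + F (Equiv.swap 1 2)) := by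
      intro F
      rw [show ({Equiv.swap 0 1, Equiv.swap 0 2, Equiv.swap 1 2} : Finset S3)
            = insert (Equiv.swap 0 1) (insert (Equiv.swap 0 2) {Equiv.swap 1 2}) from rfl,
        Finset.sum_insert (by decide), Finset.sum_insert (by decide), Finset.sum_singleton]
    rw [hCset]
    simp only [hsum]
    rw [if_neg ne1, if_neg ne2, if_neg ne3, if_neg (Ne.symm ne1), if_neg (Ne.symm ne2),
      if_neg (Ne.symm ne3)]
    simp only [if_true]
    have hr : ∀ a : S3, ((ρ0 a : Mat2ˣ) : Mat2) = fC a := fun _ => rfl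
    simp only [γ0, hr, hc1, hc2, hc3]
    ext i j
    fin_cases i <;> fin_cases j <;>
      simp [Matrix.mul_apply, Fin.sum_univ_two, Matrix.one_apply] <;> norm_num

end
end
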